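/- arXiv:2403.20326 — 3 statements merged into one kernel-verified Lean document; each statement's English description precedes it below -/
import Mathlib

section
/- Let U and V be finitely supported functions from ℤ to the nonnegative reals, each with support of size strictly less than s. If ∑_{k} k^i · U(k) = ∑_{k} k^i · V(k) for every i with 0 ≤ i < 2s, then U = V. -/
open Finset Polynomial

/-- Uniqueness of moments: two nonnegative finitely supported vectors on `ℤ` with
supports of size `< s` and equal `i`-th power moments for all `i < 2s` are equal. -/
theorem sparse_nonnegative_moment_uniqueness (s : ℕ) (U V : ℤ →₀ ℝ)
    (hU : ∀ k, 0 ≤ U k) (hV : ∀ k, 0 ≤ V k)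
    (hUs : U.support.card < s) (hVs : V.support.card < s)
    (hmom : ∀ i < 2 * s,
      ∑ k ∈ U.support, (k : ℝ) ^ i * U k = ∑ k ∈ V.support, (k : ℝ) ^ i * V k) :
    U = V := by
  set S : Finset ℤ := U.support ∪ V.support with hS
  have hcard : S.card < 2 * s := by
    calc S.card ≤ U.support.card + V.support.card := Finset.card_union_le _ _
    _ < 2 * s := by omega
  have hinj : Set.InjOn (fun k : ℤ => (k : ℝ)) S := fun a _ b _ h => by simpa using h
  have hmomW : ∀ i < 2 * s, ∑ k ∈ S, (k : ℝ) ^ i * (U k - V k) = 0 := by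
    intro i hi
    have hu : ∑ k ∈ S, (k : ℝ) ^ i * U k = ∑ k ∈ U.support, (k : ℝ) ^ i * U k := by
      refine (Finset.sum_subset Finset.subset_union_left ?_).symm
      intro k _ hk
      rw [Finsupp.notMem_support_iff.mp hk, mul_zero]
    have hv : ∑ k ∈ S, (k : ℝ) ^ i * V k = ∑ k ∈ V.support, (k : ℝ) ^ i * V k := by
      refine (Finset.sum_subset Finset.subset_union_right ?_).symm
      intro k _ hk
      rw [Finsupp.notMem_support_iff.mp hk, mul_zero]
    simp only [mul_sub, Finset.sum_sub_distrib, hu, hv, hmom i hi, sub_self]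
  have hP : ∀ P : Polynomial ℝ, P.natDegree < 2 * s →
      ∑ k ∈ S, P.eval (k : ℝ) * (U k - V k) = 0 := by
    intro P hdeg
    have : ∀ k : ℤ, P.eval (k : ℝ) * (U k - V k)
        = ∑ i ∈ Finset.range (P.natDegree + 1),
            P.coeff i * ((k : ℝ) ^ i * (U k - V k)) := by
      intro k
      rw [Polynomial.eval_eq_sum_range, Finset.sum_mul]
      exact Finset.sum_congr rfl fun i _ => by ring
    simp_rw [this]
    rw [Finset.sum_comm]
    refine Finset.sum_eq_zero fun i hi => ?_
    rw [← Finset.mul_sum, hmomW i (by simp at hi; omega), mul_zero]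
  ext k0
  by_cases hk0 : k0 ∈ S
  · have hb := hP (Lagrange.basis S (fun k : ℤ => (k : ℝ)) k0)
      (by rw [Lagrange.natDegree_basis hinj hk0]; omega)
    have hsum : ∑ k ∈ S, (Lagrange.basis S (fun k : ℤ => (k : ℝ)) k0).eval (k : ℝ)
        * (U k - V k) = U k0 - V k0 := by
      rw [Finset.sum_eq_single k0]
      · rw [Lagrange.eval_basis_self hinj hk0, one_mul]
      · intro k hk hne
        rw [Lagrange.eval_basis_of_ne (Ne.symm hne) hk, zero_mul]
      · exact fun h => absurd hk0 h
    rw [hsum] at hb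
    linarith
  · rw [hS, Finset.mem_union, not_or] at hk0
    rw [Finsupp.notMem_support_iff.mp hk0.1, Finsupp.notMem_support_iff.mp hk0.2]
end

section
/- Let V : ℤ → ℝ≥0 be a finitely supported nonnegative vector. Then the support of V has size at least s if and only if the s×s matrix A with entries A_{i,j} = ∑_k k^{i+j} V(k) (for 0 ≤ i,j < s) is nonsingular. -/
/-!
Write the moment matrix as `Mᵀ · diag(V) · M`, where `M = (k ^ j)` evaluates monomials of
degree `< s` at the support points. Then `rank A ≤ rank M ≤ #supp V`, so a nonsingular `A`
forces `s ≤ #supp V`. Conversely, if `s ≤ #supp V`, a polynomial of degree `< s` vanishing on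
the support is zero, so `M` is injective and `A` is positive definite since `V > 0` on its support.
-/

open Finset Polynomial

namespace Matrix

section Vandermonde

variable {R ι : Type*} [CommRing R]

-- With `w = 1` the projective Vandermonde matrix is the plain one, `(x k ^ j)`.
theorem rectVandermonde_one_mulVec [DecidableEq R] (x : ι → R) (s : ℕ) (c : Fin s → R) :
    rectVandermonde x 1 s *ᵥ c = fun k => (ofFn s c).eval (x k) := by
  ext k
  simp [mulVec, dotProduct, rectVandermonde_apply, ofFn_eq_sum_monomial, eval_finsetSum,
    mul_comm]

theorem mulVec_injective_rectVandermonde_one [IsDomain R] [Fintype ι] {x : ι → R}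
    (hx : Function.Injective x) {s : ℕ} (hs : s ≤ Fintype.card ι) :
    Function.Injective (rectVandermonde x 1 s).mulVec := by
  classical
  intro c d hcd
  have hdeg (v : Fin s → R) : (ofFn s v).degree < #(univ : Finset ι) :=
    (ofFn_degree_lt v).trans_le (by simpa using hs)
  refine injective_ofFn s <| eq_of_degrees_lt_of_eval_index_eq univ hx.injOn (hdeg c) (hdeg d)
    fun k _ => ?_
  simpa [rectVandermonde_one_mulVec] using congrFun hcd k

end Vandermonde

section Moment

variable {R ι : Type*}

def momentMatrix [CommSemiring R] (S : Finset ι) (x w : ι → R) (s : ℕ) :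
    Matrix (Fin s) (Fin s) R :=
  of fun i j => ∑ k ∈ S, x k ^ ((i : ℕ) + (j : ℕ)) * w k

theorem momentMatrix_eq_transpose_mul_diagonal_mul [CommRing R] [DecidableEq ι] (S : Finset ι)
    (x w : ι → R) (s : ℕ) :
    momentMatrix S x w s = (rectVandermonde (fun k : S => x k) 1 s)ᵀ *
      diagonal (fun k : S => w k) * rectVandermonde (fun k : S => x k) 1 s := by
  ext i j
  simp only [momentMatrix, of_apply, mul_apply, diagonal_apply, transpose_apply,
    rectVandermonde_apply, Pi.one_apply, one_pow, mul_one, mul_ite, mul_zero, sum_ite_eq',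
    mem_univ, if_true, ← sum_coe_sort S]
  exact sum_congr rfl fun k _ => by ring

theorem le_card_of_isUnit_det_momentMatrix [CommRing R] [StrongRankCondition R]
    {S : Finset ι} {x w : ι → R} {s : ℕ} (h : IsUnit (momentMatrix S x w s).det) :
    s ≤ #S := by
  classical
  calc s = (momentMatrix S x w s).rank := by
        simpa using (rank_of_isUnit _ ((isUnit_iff_isUnit_det _).mpr h)).symm
    _ ≤ (rectVandermonde (fun k : S => x k) 1 s).rank := by
      rw [momentMatrix_eq_transpose_mul_diagonal_mul]; exact rank_mul_le_right _ _
    _ ≤ #S := (rank_le_card_height _).trans_eq (Fintype.card_coe S)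

theorem posDef_momentMatrix {S : Finset ι} {x w : ι → ℝ} (hx : Set.InjOn x S)
    (hw : ∀ k ∈ S, 0 < w k) {s : ℕ} (hs : s ≤ #S) : (momentMatrix S x w s).PosDef := by
  classical
  rw [momentMatrix_eq_transpose_mul_diagonal_mul, ← conjTranspose_eq_transpose_of_trivial]
  exact (PosDef.diagonal fun k : S => hw k k.2).conjTranspose_mul_mul_same
    (mulVec_injective_rectVandermonde_one hx.injective (by simpa using hs))

end Moment

end Matrix

/-- A nonnegative finitely supported vector `V` on `ℤ` has support of size at least `s`
iff its `s × s` Hankel moment matrix `A_{i,j} = ∑_k k^{i+j} V(k)` is nonsingular. -/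
theorem sparsity_test_moment_matrix (s : ℕ) (V : ℤ →₀ ℝ) (hV : ∀ k, 0 ≤ V k) :
    s ≤ V.support.card ↔
      (Matrix.of fun i j : Fin s =>
        ∑ k ∈ V.support, (k : ℝ) ^ ((i : ℕ) + (j : ℕ)) * V k).det ≠ 0 := by
  have hV_pos : ∀ k ∈ V.support, 0 < V k := fun k hk =>
    (hV k).lt_of_ne' (Finsupp.mem_support_iff.mp hk)
  change s ≤ #V.support ↔
    (Matrix.momentMatrix V.support (fun k : ℤ => (k : ℝ)) V s).det ≠ 0
  exact ⟨fun hs => (Matrix.posDef_momentMatrix Int.cast_injective.injOn hV_pos hs).det_pos.ne',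
    fun hdet => Matrix.le_card_of_isUnit_det_momentMatrix hdet.isUnit⟩
end

section
/- Let p be a prime and let h(x) = x mod p. For finitely supported A, B, C : ℕ → R (R a commutative ring), define X⁽ⁱ⁾ ∈ R^p by X⁽ⁱ⁾ = (∑_{j=0}^{i} C(i,j) · h(∂^j A) ⋆_p h(∂^{i−j} B)) − h(∂^i C), where h(V)(r) = ∑_{k ≡ r mod p} V(k), ⋆_p is cyclic convolution of length p, and (∂^d V)(k) = k^d V(k). Then for every bucket k ∈ [p], X⁽ⁱ⁾(k) = ∑_{ℓ ≡ k (mod p)} ℓ^i · (A⋆B − C)(ℓ), i.e. X⁽ⁱ⁾ = h(∂^i (A⋆B − C)). -/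
open Pointwise

/-- Moment computation commutes with hashing mod `p`: for every bucket `k ∈ [p]`,
`X⁽ⁱ⁾(k) = (∑_{j≤i} C(i,j) · h(∂^j A) ⋆_p h(∂^{i−j} B))(k) − h(∂^i C)(k)` equals
`∑_{ℓ ≡ k (mod p)} ℓ^i · (A⋆B − C)(ℓ)`. -/
theorem hashed_moments_identity (R : Type*) [CommRing R] (p : ℕ) (hp : p.Prime)
    (A B C : ℕ →₀ R) (i : ℕ) :
    ∀ k < p,
      (∑ j ∈ Finset.range (i + 1), (i.choose j : R) *
          (∑ a ∈ Finset.range p, ∑ b ∈ Finset.range p,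
            if (a + b) % p = k then
              (∑ u ∈ A.support.filter (fun u => u % p = a), (u : R) ^ j * A u) *
              (∑ w ∈ B.support.filter (fun w => w % p = b), (w : R) ^ (i - j) * B w)
            else 0))
        - (∑ z ∈ C.support.filter (fun z => z % p = k), (z : R) ^ i * C z)
      = ∑ ℓ ∈ ((A.support + B.support) ∪ C.support).filter (fun ℓ => ℓ % p = k),
          (ℓ : R) ^ i * ((∑ ab ∈ Finset.HasAntidiagonal.antidiagonal ℓ, A ab.1 * B ab.2) - C ℓ) := by
  intro k hk
  have hp0 : 0 < p := hp.pos
  set T := (A.support + B.support) ∪ C.support with hT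
  have key : ∀ (X Y : ℕ → R),
      (∑ a ∈ Finset.range p, ∑ b ∈ Finset.range p,
          if (a + b) % p = k then
            (∑ u ∈ A.support.filter (fun u => u % p = a), X u) *
            (∑ w ∈ B.support.filter (fun w => w % p = b), Y w)
          else 0)
    = ∑ u ∈ A.support, ∑ w ∈ B.support,
        if (u + w) % p = k then X u * Y w else 0 := by
    intro X Y
    have h1 : ∀ a ∈ Finset.range p, ∀ b ∈ Finset.range p,
        (if (a + b) % p = k then
            (∑ u ∈ A.support.filter (fun u => u % p = a), X u) *
            (∑ w ∈ B.support.filter (fun w => w % p = b), Y w) else 0)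
        = ∑ u ∈ A.support.filter (fun u => u % p = a),
            ∑ w ∈ B.support.filter (fun w => w % p = b),
              if (u + w) % p = k then X u * Y w else 0 := by
      intro a _ b _
      split_ifs with h
      · rw [Finset.sum_mul_sum]
        refine Finset.sum_congr rfl fun u hu => Finset.sum_congr rfl fun w hw => ?_
        have hu' := (Finset.mem_filter.mp hu).2
        have hw' := (Finset.mem_filter.mp hw).2
        rw [if_pos (by rw [Nat.add_mod, hu', hw']; exact h)]
      · symm
        refine Finset.sum_eq_zero fun u hu => Finset.sum_eq_zero fun w hw => ?_
        have hu' := (Finset.mem_filter.mp hu).2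
        have hw' := (Finset.mem_filter.mp hw).2
        rw [if_neg]
        intro hc
        rw [Nat.add_mod, hu', hw'] at hc
        exact h hc
    rw [Finset.sum_congr rfl fun a ha => Finset.sum_congr rfl fun b hb => h1 a ha b hb]
    have h2 : ∀ a, (∑ b ∈ Finset.range p,
          ∑ u ∈ A.support.filter (fun u => u % p = a),
            ∑ w ∈ B.support.filter (fun w => w % p = b),
              if (u + w) % p = k then X u * Y w else 0)
        = ∑ u ∈ A.support.filter (fun u => u % p = a),
            ∑ w ∈ B.support,
              if (u + w) % p = k then X u * Y w else 0 := by
      intro a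
      rw [Finset.sum_comm]
      refine Finset.sum_congr rfl fun u _ => ?_
      exact Finset.sum_fiberwise_of_maps_to
        (fun w _ => Finset.mem_range.mpr (Nat.mod_lt w hp0)) _
    rw [Finset.sum_congr rfl fun a _ => h2 a]
    exact Finset.sum_fiberwise_of_maps_to
      (fun u _ => Finset.mem_range.mpr (Nat.mod_lt u hp0)) _
  have step1 : (∑ j ∈ Finset.range (i + 1), (i.choose j : R) *
          (∑ a ∈ Finset.range p, ∑ b ∈ Finset.range p,
            if (a + b) % p = k then
              (∑ u ∈ A.support.filter (fun u => u % p = a), (u : R) ^ j * A u) *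
              (∑ w ∈ B.support.filter (fun w => w % p = b), (w : R) ^ (i - j) * B w)
            else 0))
      = ∑ u ∈ A.support, ∑ w ∈ B.support,
          if (u + w) % p = k then ((u + w : ℕ) : R) ^ i * (A u * B w) else 0 := by
    rw [Finset.sum_congr rfl fun j _ => congrArg _ (key (fun u => (u : R) ^ j * A u)
      (fun w => (w : R) ^ (i - j) * B w))]
    simp_rw [Finset.mul_sum, mul_ite, mul_zero]
    rw [Finset.sum_comm]
    refine Finset.sum_congr rfl fun u _ => ?_
    rw [Finset.sum_comm]
    refine Finset.sum_congr rfl fun w _ => ?_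
    by_cases h : (u + w) % p = k
    · simp only [if_pos h]
      push_cast
      rw [add_pow, Finset.sum_mul]
      refine Finset.sum_congr rfl fun j _ => ?_
      ring
    · simp [h]
  rw [step1]
  simp_rw [mul_sub]
  rw [Finset.sum_sub_distrib]
  congr 1
  · -- convolution part
    rw [← Finset.sum_product']
    rw [← Finset.sum_filter]
    set S := (A.support ×ˢ B.support).filter (fun q => (q.1 + q.2) % p = k) with hS
    have maps : ∀ q ∈ S, q.1 + q.2 ∈ T.filter (fun ℓ => ℓ % p = k) := by
      intro q hq
      rw [hS, Finset.mem_filter, Finset.mem_product] at hq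
      rw [Finset.mem_filter]
      exact ⟨Finset.mem_union_left _ (Finset.add_mem_add hq.1.1 hq.1.2), hq.2⟩
    rw [← Finset.sum_fiberwise_of_maps_to maps (fun q => ((q.1 + q.2 : ℕ) : R) ^ i * (A q.1 * B q.2))]
    refine Finset.sum_congr rfl fun ℓ hℓ => ?_
    rw [Finset.mem_filter] at hℓ
    have hfib : S.filter (fun q => q.1 + q.2 = ℓ)
        = (A.support ×ˢ B.support).filter (fun q => q.1 + q.2 = ℓ) := by
      rw [hS, Finset.filter_filter]
      refine Finset.filter_congr fun q _ => ?_
      constructor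
      · exact fun h => h.2
      · exact fun h => ⟨by rw [h]; exact hℓ.2, h⟩
    rw [hfib, Finset.mul_sum]
    have hsub : ∑ ab ∈ Finset.HasAntidiagonal.antidiagonal ℓ, (ℓ : R) ^ i * (A ab.1 * B ab.2)
        = ∑ q ∈ (A.support ×ˢ B.support).filter (fun q => q.1 + q.2 = ℓ),
            (ℓ : R) ^ i * (A q.1 * B q.2) := by
      symm
      apply Finset.sum_subset
      · intro q hq
        rw [Finset.mem_filter] at hq
        exact Finset.HasAntidiagonal.mem_antidiagonal.mpr hq.2
      · intro q hq hq'
        rw [Finset.HasAntidiagonal.mem_antidiagonal] at hq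
        rw [Finset.mem_filter, Finset.mem_product] at hq'
        have : q.1 ∉ A.support ∨ q.2 ∉ B.support := by
          by_contra hc
          push_neg at hc
          exact hq' ⟨⟨hc.1, hc.2⟩, hq⟩
        rcases this with h | h
        · rw [Finsupp.notMem_support_iff.mp h, zero_mul, mul_zero]
        · rw [Finsupp.notMem_support_iff.mp h, mul_zero, mul_zero]
    rw [hsub]
    refine Finset.sum_congr rfl fun q hq => ?_
    rw [Finset.mem_filter] at hq
    rw [hq.2]
  · -- C part
    apply Finset.sum_subset
    · intro z hz
      rw [Finset.mem_filter] at hz ⊢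
      exact ⟨Finset.mem_union_right _ hz.1, hz.2⟩
    · intro z hz hz'
      rw [Finset.mem_filter] at hz hz'
      have : z ∉ C.support := fun hc => hz' ⟨hc, hz.2⟩
      rw [Finsupp.notMem_support_iff.mp this, mul_zero]
end
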